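/- The restriction map from the space of entire functions H(ℂ) (with the compact-open topology) to C[a,b] (with the sup norm), f ↦ f|_{[a,b]}, is continuous and has dense range, and it intertwines the differentiation operators: (f|_{[a,b]})' = f'|_{[a,b]}. Consequently, the image of any hypercyclic vector for differentiation on H(ℂ) is hypercyclic for differentiation on C([a,b],ℂ). -/

import Mathlib

/-!
Restrictions of entire functions to a compact `s ⊆ ℝ` form a star subalgebra of `C(s, ℂ)`
containing the point-separating function `x ↦ x`, so they are dense by Stone–Weierstrass.
If the `D`-orbit of `f` approximates every entire function uniformly on the compact set `s ⊆ ℂ`,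
its restrictions therefore approximate a dense subset of `C(s, ℂ)`.
-/

open Filter ComplexConjugate

def entireRestrictions (s : Set ℝ) : StarSubalgebra ℂ C(s, ℂ) where
  carrier := {g | ∃ f : ℂ → ℂ, Differentiable ℂ f ∧ ∀ x : s, g x = f (x : ℝ)}
  mul_mem' := by
    rintro _ _ ⟨f, hf, hfg⟩ ⟨h, hh, hhg⟩
    exact ⟨f * h, hf.mul hh, fun x => by simp [hfg, hhg]⟩
  add_mem' := by
    rintro _ _ ⟨f, hf, hfg⟩ ⟨h, hh, hhg⟩
    exact ⟨f + h, hf.add hh, fun x => by simp [hfg, hhg]⟩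
  algebraMap_mem' r := ⟨fun _ => r, differentiable_const r, fun _ => rfl⟩
  -- `z ↦ conj (f (conj z))` is entire and agrees with `conj ∘ f` on `ℝ`
  star_mem' := by
    rintro _ ⟨f, hf, hfg⟩
    refine ⟨conj ∘ f ∘ conj, fun z => ?_, fun x => by simp [hfg]⟩
    simpa using (hf (conj z)).conj_conj

theorem entireRestrictions_separatesPoints (s : Set ℝ) :
    (entireRestrictions s).SeparatesPoints := by
  intro x y hxy
  refine ⟨_, ⟨⟨fun t : s => ((t : ℝ) : ℂ), by fun_prop⟩, ⟨id, differentiable_id, fun _ => rfl⟩,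
    rfl⟩, ?_⟩
  simpa [Subtype.ext_iff] using hxy

theorem dense_entireRestrictions (s : Set ℝ) [CompactSpace s] :
    Dense (entireRestrictions s : Set C(s, ℂ)) := by
  have := ContinuousMap.starSubalgebra_topologicalClosure_eq_top_of_separatesPoints _
    (entireRestrictions_separatesPoints s)
  rw [dense_iff_closure_eq, ← StarSubalgebra.topologicalClosure_coe, this]
  rfl

theorem tendstoUniformlyOn_comp_ofReal {ι : Type*} {l : Filter ι} {F : ι → ℂ → ℂ} {f : ℂ → ℂ}
    {s : Set ℝ} (hs : IsCompact s)
    (hF : ∀ K : Set ℂ, IsCompact K → TendstoUniformlyOn F f l K) :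
    TendstoUniformlyOn (fun i (x : ℝ) => F i x) (fun x : ℝ => f x) l s :=
  ((hF _ (hs.image Complex.continuous_ofReal)).comp _).mono (Set.subset_preimage_image _ _)

theorem derivWithin_comp_ofReal {f : ℂ → ℂ} {s : Set ℝ} {x : ℝ}
    (hf : DifferentiableAt ℂ f x) (hs : UniqueDiffWithinAt ℝ s x) :
    derivWithin (fun t : ℝ => f t) s x = deriv f x :=
  hf.hasDerivAt.comp_ofReal.hasDerivWithinAt.derivWithin hs

theorem dense_iteratedDeriv_restrictions {f : ℂ → ℂ} (hf : Differentiable ℂ f)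
    (hypercyclic : ∀ g : ℂ → ℂ, Differentiable ℂ g → ∀ K : Set ℂ, IsCompact K → ∀ ε > 0,
      ∃ k : ℕ, ∀ z ∈ K, ‖iteratedDeriv k f z - g z‖ < ε)
    (s : Set ℝ) [CompactSpace s] :
    Dense {g : C(s, ℂ) | ∃ k : ℕ, ∀ x : s, g x = iteratedDeriv k f (x : ℝ)} := by
  refine dense_closure.mp ((dense_entireRestrictions s).mono ?_)
  rintro g ⟨u, hu, hgu⟩
  rw [Metric.mem_closure_iff]
  intro ε hε
  obtain ⟨k, hk⟩ := hypercyclic u hu _ (isCompact_range (by fun_prop : Continuous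
    fun x : s => ((x : ℝ) : ℂ))) (ε / 2) (half_pos hε)
  have hcont : Continuous (iteratedDeriv k f) := hf.contDiff.continuous_iteratedDeriv' k
  refine ⟨⟨fun x : s => iteratedDeriv k f (x : ℝ), by fun_prop⟩, ⟨k, fun _ => rfl⟩, ?_⟩
  calc dist g _ ≤ ε / 2 := (ContinuousMap.dist_le (half_pos hε).le).mpr fun x => by
        rw [dist_comm, dist_eq_norm, hgu]
        exact (hk _ ⟨x, rfl⟩).le
    _ < ε := half_lt_self hε

/-- The restriction map `H(ℂ) → C([a,b],ℂ)`, `f ↦ f|_{[a,b]}`, is continuous (uniform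
convergence on compacts implies uniform convergence on `[a,b]`), has dense range,
intertwines differentiation, and consequently maps hypercyclic vectors of `D` on
`H(ℂ)` to hypercyclic vectors of `D` on `C([a,b],ℂ)`. -/
theorem stmt_19 (a b : ℝ) (hab : a < b) :
    -- continuity of the restriction map
    (∀ (F : ℕ → ℂ → ℂ) (f : ℂ → ℂ), (∀ i, Differentiable ℂ (F i)) →
      Differentiable ℂ f →
      (∀ K : Set ℂ, IsCompact K → TendstoUniformlyOn (fun i => F i) f atTop K) →
      TendstoUniformlyOn (fun i (x : ℝ) => F i x) (fun x : ℝ => f x) atTop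
        (Set.Icc a b)) ∧
    -- dense range
    Dense {g : C(Set.Icc a b, ℂ) |
      ∃ f : ℂ → ℂ, Differentiable ℂ f ∧ ∀ x : Set.Icc a b, g x = f (x : ℝ)} ∧
    -- intertwining of differentiation
    (∀ f : ℂ → ℂ, Differentiable ℂ f → ∀ x ∈ Set.Icc a b,
      derivWithin (fun t : ℝ => f t) (Set.Icc a b) x = deriv f x) ∧
    -- hypercyclic vectors are mapped to hypercyclic vectors
    (∀ f : ℂ → ℂ, Differentiable ℂ f →
      (∀ g : ℂ → ℂ, Differentiable ℂ g → ∀ K : Set ℂ, IsCompact K → ∀ ε > 0,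
        ∃ k : ℕ, ∀ z ∈ K, ‖iteratedDeriv k f z - g z‖ < ε) →
      Dense {g : C(Set.Icc a b, ℂ) |
        ∃ k : ℕ, ∀ x : Set.Icc a b, g x = iteratedDeriv k f (x : ℝ)}) :=
  ⟨fun _ _ _ _ hF => tendstoUniformlyOn_comp_ofReal isCompact_Icc hF,
    dense_entireRestrictions _,
    fun _ hf x hx => derivWithin_comp_ofReal (hf _) (uniqueDiffOn_Icc hab x hx),
    fun _ hf hypercyclic => dense_iteratedDeriv_restrictions hf hypercyclic _⟩
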